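/- arXiv:2111.10303 — 2 statements merged into one kernel-verified Lean document; each statement's English description precedes it below -/
import Mathlib

section
/- Fix points h, h' ∈ ℝ² with h_x < h'_x and h_y > h'_y, and for a slice s with dual point (a,b) ∈ (0,1] × ℝ define push_s as usual. Then push_s(h) < push_s(h') if and only if the dual point (a,b) of s lies strictly above the line (h ∨ h')*, i.e., b > -h'_x·a + h_y, where h ∨ h' = (h'_x, h_y) is the join of h and h' in the product order, and push_s(h) > push_s(h') if and only if b < -h'_x·a + h_y. -/
/-- Push of a point onto the slice `y = a*x + b`. -/
noncomputable def push (a b : ℝ) (p : ℝ × ℝ) : ℝ := max p.2 (a * p.1 + b)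

/-- For `h, h'` with `h_x < h'_x` and `h_y > h'_y` (so `h ∨ h' = (h'_x, h_y)`),
and a slice with dual point `(a,b) ∈ (0,1] × ℝ`:
`push_s(h) < push_s(h')` iff `(a,b)` is strictly above the dual line of the
join, i.e. `b > -h'_x·a + h_y`; and `push_s(h) > push_s(h')` iff
`b < -h'_x·a + h_y`. -/
theorem push_order_vs_join_dual (h h' : ℝ × ℝ) (hx : h.1 < h'.1) (hy : h.2 > h'.2)
    (a b : ℝ) (ha : 0 < a) (ha1 : a ≤ 1) :
    (push a b h < push a b h' ↔ b > -h'.1 * a + h.2) ∧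
    (push a b h > push a b h' ↔ b < -h'.1 * a + h.2) := by
  have hab : a * h.1 + b < a * h'.1 + b := by nlinarith
  have key1 : push a b h < push a b h' ↔ h.2 < a * h'.1 + b := by
    unfold push
    constructor
    · intro H
      rcases lt_max_iff.mp (max_lt_iff.mp H).1 with h1 | h1
      · linarith
      · exact h1
    · intro H
      apply max_lt <;> apply lt_max_iff.mpr <;> right <;> linarith
  have key2 : push a b h' < push a b h ↔ a * h'.1 + b < h.2 := by
    unfold push
    constructor
    · intro H
      by_contra hc
      push_neg at hc
      have : max h.2 (a * h.1 + b) ≤ max h'.2 (a * h'.1 + b) := by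
        apply max_le <;> apply le_max_iff.mpr <;> right <;> linarith
      linarith
    · intro H
      calc max h'.2 (a * h'.1 + b) < h.2 := by apply max_lt <;> linarith
        _ ≤ max h.2 (a * h.1 + b) := le_max_left _ _
  constructor
  · rw [key1]; constructor <;> intro <;> linarith
  · rw [gt_iff_lt, key2]; constructor <;> intro <;> linarith
end

section
/- Fix points h, h' ∈ ℝ². For any two slices s, s' whose dual points lie in the same open region of the arrangement of lines in (0,1] × ℝ determined by h and h' (namely, for each pair among {h,h'} with incomparable grades, the dual line of their join), we have: push_s(h) ≤ push_s(h') if and only if push_{s'}(h) ≤ push_{s'}(h'). -/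
/-- The join of two points in the product order on ℝ². -/
def join (p q : ℝ × ℝ) : ℝ × ℝ := (max p.1 q.1, max p.2 q.2)

lemma above_iff (h h' : ℝ × ℝ) (a b : ℝ) (ha : 0 < a)
    (hb : max h.2 h'.2 < a * max h.1 h'.1 + b) :
    (push a b h ≤ push a b h' ↔ h.1 ≤ h'.1) := by
  have h2 : h.2 ≤ max h.2 h'.2 := le_max_left _ _
  have h2' : h'.2 ≤ max h.2 h'.2 := le_max_right _ _
  constructor
  · intro hle
    by_contra hc
    push_neg at hc
    have hm : max h.1 h'.1 = h.1 := max_eq_left hc.le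
    rw [hm] at hb
    have hp : push a b h = a * h.1 + b := max_eq_right (by linarith)
    have hph' : push a b h' < a * h.1 + b := by
      apply max_lt (by linarith)
      have := mul_lt_mul_of_pos_left hc ha
      linarith
    rw [hp] at hle; linarith
  · intro hle
    have hm : max h.1 h'.1 = h'.1 := max_eq_right hle
    rw [hm] at hb
    have hp' : push a b h' = a * h'.1 + b := max_eq_right (by linarith)
    rw [hp']
    apply max_le (by linarith)
    have := mul_le_mul_of_nonneg_left hle ha.le
    linarith

lemma below_iff (h h' : ℝ × ℝ) (a b : ℝ) (ha : 0 < a)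
    (hb : a * max h.1 h'.1 + b < max h.2 h'.2) :
    (push a b h ≤ push a b h' ↔ h.2 ≤ h'.2) := by
  have h1 : a * h.1 + b ≤ a * max h.1 h'.1 + b := by
    have := mul_le_mul_of_nonneg_left (le_max_left h.1 h'.1) ha.le; linarith
  have h1' : a * h'.1 + b ≤ a * max h.1 h'.1 + b := by
    have := mul_le_mul_of_nonneg_left (le_max_right h.1 h'.1) ha.le; linarith
  rcases le_total h.2 h'.2 with hc | hc
  · have hm : max h.2 h'.2 = h'.2 := max_eq_right hc
    rw [hm] at hb
    have hp' : push a b h' = h'.2 := max_eq_left (by linarith)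
    have hp : push a b h ≤ h'.2 := max_le (by linarith) (by linarith)
    simp [hp', hp, hc]
  · have hm : max h.2 h'.2 = h.2 := max_eq_left hc
    rw [hm] at hb
    have hp : push a b h = h.2 := max_eq_left (by linarith)
    rw [hp]
    constructor
    · intro hle
      rcases le_max_iff.mp hle with hx | hx
      · exact hx
      · linarith
    · intro hle
      exact le_max_of_le_left hle

/-- If the dual points `(a,b)` and `(a',b')` of two slices lie in the same open
region determined by the dual line of `h ∨ h'` (i.e. both strictly above it or
both strictly below it), then `push_s(h) ≤ push_s(h')` iff
`push_{s'}(h) ≤ push_{s'}(h')`. -/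
theorem push_order_constant_in_region (h h' : ℝ × ℝ) (a b a' b' : ℝ)
    (ha : 0 < a) (ha1 : a ≤ 1) (ha' : 0 < a') (ha1' : a' ≤ 1)
    (hregion :
      (b > -(join h h').1 * a + (join h h').2 ∧
        b' > -(join h h').1 * a' + (join h h').2) ∨
      (b < -(join h h').1 * a + (join h h').2 ∧
        b' < -(join h h').1 * a' + (join h h').2)) :
    (push a b h ≤ push a b h' ↔ push a' b' h ≤ push a' b' h') := by
  simp only [join] at hregion
  rcases hregion with ⟨hb, hb'⟩ | ⟨hb, hb'⟩
  · rw [above_iff h h' a b ha (by linarith), above_iff h h' a' b' ha' (by linarith)]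
  · rw [below_iff h h' a b ha (by linarith), below_iff h h' a' b' ha' (by linarith)]
end
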